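/- Let 1 ≤ p ≤ k − 1 and d, e ≥ 2 be integers. Let f : ℂ^k → ℂ^k be a bijective polynomial map whose inverse g is also polynomial. Write f = (f', f'') with f' = (f₁, …, f_p) and f'' = (f_{p+1}, …, f_k), g = (g', g'') similarly, and write points of ℂ^k as z = (z', z'') ∈ ℂ^p × ℂ^{k−p}. Assume: each f_j has degree at most d, and every common zero of the degree-d homogeneous parts of f₁, …, f_p lies in {z' = 0}; each g_j has degree at most e, and every common zero of the degree-e homogeneous parts of g_{p+1}, …, g_k lies in {z'' = 0}. Then there exists R₀ > 0 such that for every R ≥ R₀, setting D := B_p^R × B_{k−p}^R and U := {z ∈ D : f(z) ∈ D}, one has U ⊆ B_p^{R/2} × B_{k−p}^R and f(U) ⊆ B_p^R × B_{k−p}^{R/2}; in particular, if U is nonempty, the restriction f : U → f(U) is an invertible horizontal-like map on D. -/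

import Mathlib

/-!
On the cone `‖z‖ ≤ 2‖z'‖` the degree-`d` parts of `f'` have no common zero on the unit sphere,
so by compactness and homogeneity they are bounded below by `c‖z‖ᵈ` there, while the lower-order
terms are `O(‖z‖ᵈ⁻¹)`; hence `‖f'(z)‖ ≥ 2‖z‖` on that cone for `‖z‖` large. A point of `U` with
`‖z'‖ ≥ R/2` would therefore have `‖f'(z)‖ ≥ R`, contradicting `f(z) ∈ D`. The same argument for
`g` at the point `f(z)`, where `g''(f(z)) = z''`, gives `‖f''(z)‖ < R/2`. Horizontal-likeness then
only uses that `f` is a holomorphic homeomorphism and that `B^{R/2} ⋐ B^R`.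
-/

open MvPolynomial

/-- An invertible horizontal-like map on `D = M × N`: a biholomorphism `f : U → V` between
nonempty open subsets of `D` (encoded as an injective holomorphic map with `f '' U = V`), whose
graph is closed in `D × D`, and such that `U ⊆ M₀ × N` and `V ⊆ M × N₀` for some open sets
`M₀ ⋐ M`, `N₀ ⋐ N`. -/
def InvHorizLike {p q : ℕ} (M : Set (EuclideanSpace ℂ (Fin p))) (N : Set (EuclideanSpace ℂ (Fin q)))
    (f : EuclideanSpace ℂ (Fin p) × EuclideanSpace ℂ (Fin q) →
      EuclideanSpace ℂ (Fin p) × EuclideanSpace ℂ (Fin q))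
    (U V : Set (EuclideanSpace ℂ (Fin p) × EuclideanSpace ℂ (Fin q))) : Prop :=
  IsOpen U ∧ IsOpen V ∧ U.Nonempty ∧ V.Nonempty ∧ U ⊆ M ×ˢ N ∧ V ⊆ M ×ˢ N ∧
  DifferentiableOn ℂ f U ∧ Set.InjOn f U ∧ f '' U = V ∧
  closure ((fun z => (z, f z)) '' U) ∩ ((M ×ˢ N) ×ˢ (M ×ˢ N)) ⊆ (fun z => (z, f z)) '' U ∧
  ∃ M₀ N₀, IsOpen M₀ ∧ IsOpen N₀ ∧ IsCompact (closure M₀) ∧ closure M₀ ⊆ M ∧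
    IsCompact (closure N₀) ∧ closure N₀ ⊆ N ∧ U ⊆ M₀ ×ˢ N ∧ V ⊆ M ×ˢ N₀

/-- Identification of `ℂ^p × ℂ^{k−p}` (as Euclidean spaces) with functions on
`Fin p ⊕ Fin (k−p)`. -/
noncomputable def ofV {p q : ℕ} (z : EuclideanSpace ℂ (Fin p) × EuclideanSpace ℂ (Fin q)) :
    (Fin p ⊕ Fin q) → ℂ :=
  Sum.elim (WithLp.equiv 2 ((i : Fin p) → ℂ) z.1) (WithLp.equiv 2 ((i : Fin q) → ℂ) z.2)

/-- Inverse identification. -/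
noncomputable def toV {p q : ℕ} (z : (Fin p ⊕ Fin q) → ℂ) :
    EuclideanSpace ℂ (Fin p) × EuclideanSpace ℂ (Fin q) :=
  ((WithLp.equiv 2 ((i : Fin p) → ℂ)).symm fun i => z (Sum.inl i),
    (WithLp.equiv 2 ((i : Fin q) → ℂ)).symm fun i => z (Sum.inr i))

/-- The polynomial map `ℂ^p × ℂ^{k−p} → ℂ^p × ℂ^{k−p}` defined by a family of polynomials. -/
noncomputable def polyMap {p q : ℕ} (P : (Fin p ⊕ Fin q) → MvPolynomial (Fin p ⊕ Fin q) ℂ)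
    (z : EuclideanSpace ℂ (Fin p) × EuclideanSpace ℂ (Fin q)) :
    EuclideanSpace ℂ (Fin p) × EuclideanSpace ℂ (Fin q) :=
  toV fun j => eval (ofV z) (P j)

open Filter Function Metric Set

namespace MvPolynomial

variable {σ : Type*}

theorem IsHomogeneous.eval_smul {R : Type*} [CommSemiring R] {φ : MvPolynomial σ R} {n : ℕ}
    (h : φ.IsHomogeneous n) (c : R) (z : σ → R) : eval (c • z) φ = c ^ n * eval z φ := by
  rw [eval_eq, eval_eq, Finset.mul_sum]
  refine Finset.sum_congr rfl fun m hm => ?_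
  have hdeg : ∑ i ∈ m.support, m i = n := by
    rw [← Finsupp.degree_apply, Finsupp.degree_eq_weight_one]
    exact h (mem_support_iff.mp hm)
  simp only [Pi.smul_apply, smul_eq_mul, mul_pow, Finset.prod_mul_distrib,
    Finset.prod_pow_eq_pow_sum, hdeg]
  ring

theorem totalDegree_sub_homogeneousComponent_le {R : Type*} [CommRing R] {φ : MvPolynomial σ R}
    {d : ℕ} (h : φ.totalDegree ≤ d) : (φ - homogeneousComponent d φ).totalDegree ≤ d - 1 := by
  refine Finset.sup_le fun m hm => ?_
  have hcoeff : coeff m φ - (if m.degree = d then coeff m φ else 0) ≠ 0 := by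
    rwa [← coeff_homogeneousComponent, ← coeff_sub, ← mem_support_iff]
  have hm_ne : m.degree ≠ d := fun hmd => by simp [hmd] at hcoeff
  have hm_le : m.degree ≤ d :=
    (le_totalDegree (mem_support_iff.mpr (by simpa [hm_ne] using hcoeff))).trans h
  change m.degree ≤ d - 1
  omega

theorem norm_eval_le_sum_norm_coeff_mul_pow {𝕜 : Type*} [NormedField 𝕜] [Fintype σ]
    (φ : MvPolynomial σ 𝕜) {z : σ → 𝕜} {M : ℝ} (hM : 1 ≤ M) (hz : ‖z‖ ≤ M) {D : ℕ}
    (hD : φ.totalDegree ≤ D) : ‖eval z φ‖ ≤ (∑ m ∈ φ.support, ‖coeff m φ‖) * M ^ D := by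
  rw [eval_eq, Finset.sum_mul]
  refine (norm_sum_le _ _).trans (Finset.sum_le_sum fun m hm => ?_)
  rw [norm_mul, norm_prod]
  gcongr
  calc ∏ i ∈ m.support, ‖z i ^ m i‖ ≤ ∏ i ∈ m.support, M ^ m i := by
        gcongr with i
        rw [norm_pow]
        exact pow_le_pow_left₀ (norm_nonneg _) ((norm_le_pi_norm z i).trans hz) _
    _ = M ^ (∑ i ∈ m.support, m i) := Finset.prod_pow_eq_pow_sum _ _ _
    _ ≤ M ^ D := pow_le_pow_right₀ hM ((le_totalDegree hm).trans hD)

end MvPolynomial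

section Growth

variable {E σ ι : Type*} [NormedAddCommGroup E] [NormedSpace ℂ E] [ProperSpace E] [Fintype ι]

theorem exists_pos_mul_norm_pow_le_norm_eval (ev : E →L[ℂ] σ → ℂ) {d : ℕ}
    (hd : d ≠ 0) (H : ι → MvPolynomial σ ℂ) (hH : ∀ j, (H j).IsHomogeneous d) (N : E → ℝ)
    (hN : Continuous N) (hNsmul : ∀ (c : ℂ) v, N (c • v) = ‖c‖ * N v)
    (hzero : ∀ v, (∀ j, eval (ev v) (H j) = 0) → N v = 0) (K : ℝ) :
    ∃ c > 0, ∀ z, ‖z‖ ≤ K * N z → c * ‖z‖ ^ d ≤ ‖fun j => eval (ev z) (H j)‖ := by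
  set S := {v : E | ‖v‖ = 1 ∧ 1 ≤ K * N v}
  have hS : IsCompact S := (isCompact_sphere (0 : E) 1).of_isClosed_subset
    ((isClosed_eq continuous_norm continuous_const).inter
      (isClosed_le continuous_const (continuous_const.mul hN)))
    fun v hv => mem_sphere_zero_iff_norm.2 hv.1
  have hcont : Continuous fun v => ‖fun j => eval (ev v) (H j)‖ :=
    (continuous_pi fun j => (continuous_eval (H j)).comp ev.continuous).norm
  have hpos : ∀ v ∈ S, 0 < ‖fun j => eval (ev v) (H j)‖ := by
    refine fun v hv => norm_pos_iff.2 fun h0 => ?_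
    have := hv.2
    rw [hzero v fun j => congrFun h0 j, mul_zero] at this
    exact absurd this (by norm_num)
  obtain ⟨c, hc, hcS⟩ := hS.exists_forall_le' hcont.continuousOn hpos
  refine ⟨c, hc, fun z hz => ?_⟩
  rcases eq_or_ne z 0 with rfl | hz0
  · simp [zero_pow hd]
  set s := ‖z‖
  have hs : 0 < s := norm_pos_iff.2 hz0
  have hzs : z = (s : ℂ) • ((s : ℂ)⁻¹ • z) := by
    rw [smul_smul, mul_inv_cancel₀ (by exact_mod_cast hs.ne'), one_smul]
  have hnorm : ‖(s : ℂ)⁻¹‖ = s⁻¹ := by simp [hs.le]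
  have hvS : (s : ℂ)⁻¹ • z ∈ S := by
    refine ⟨by rw [norm_smul, hnorm, inv_mul_cancel₀ hs.ne'], ?_⟩
    rw [hNsmul, hnorm, mul_left_comm, ← div_eq_inv_mul, le_div_iff₀ hs, one_mul]
    exact hz
  have hscale : (fun j => eval (ev z) (H j)) =
      (s : ℂ) ^ d • fun j => eval (ev ((s : ℂ)⁻¹ • z)) (H j) := by
    conv_lhs => rw [hzs]
    funext j
    rw [map_smul, (hH j).eval_smul, Pi.smul_apply, smul_eq_mul]
  rw [hscale, norm_smul, norm_pow, Complex.norm_real, Real.norm_of_nonneg hs.le, mul_comm]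
  exact mul_le_mul_of_nonneg_left (hcS _ hvS) (by positivity)

theorem exists_mul_norm_le_norm_eval [Fintype σ] (ev : E →L[ℂ] σ → ℂ)
    (hev : ∀ z, ‖ev z‖ ≤ ‖z‖) {d : ℕ} (hd : 2 ≤ d) (F : ι → MvPolynomial σ ℂ)
    (hF : ∀ j, (F j).totalDegree ≤ d) (N : E → ℝ) (hN : Continuous N)
    (hNsmul : ∀ (c : ℂ) v, N (c • v) = ‖c‖ * N v)
    (hzero : ∀ v, (∀ j, eval (ev v) (homogeneousComponent d (F j)) = 0) → N v = 0) (K C : ℝ) :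
    ∃ R₁, ∀ z, R₁ ≤ ‖z‖ → ‖z‖ ≤ K * N z → C * ‖z‖ ≤ ‖fun j => eval (ev z) (F j)‖ := by
  set H := fun j => homogeneousComponent d (F j)
  obtain ⟨c, hc, htop⟩ := exists_pos_mul_norm_pow_le_norm_eval ev (by omega) H
    (fun j => homogeneousComponent_isHomogeneous d (F j)) N hN hNsmul hzero K
  set A := ∑ j, ∑ m ∈ (F j - H j).support, ‖coeff m (F j - H j)‖
  refine ⟨max 1 ((|C| + A) / c), fun z hzR hzK => ?_⟩
  set s := ‖z‖
  have hs1 : 1 ≤ s := (le_max_left _ _).trans hzR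
  have hsA : |C| + A ≤ c * s := by
    rw [← div_le_iff₀' hc]
    exact (le_max_right _ _).trans hzR
  have hrem : ‖fun j => eval (ev z) (F j - H j)‖ ≤ A * s ^ (d - 1) := by
    refine (pi_norm_le_iff_of_nonneg (by positivity)).2 fun j => ?_
    refine ((F j - H j).norm_eval_le_sum_norm_coeff_mul_pow hs1 (hev z)
      (totalDegree_sub_homogeneousComponent_le (hF j))).trans ?_
    gcongr
    exact Finset.single_le_sum (f := fun j => ∑ m ∈ (F j - H j).support, ‖coeff m (F j - H j)‖)
      (fun _ _ => Finset.sum_nonneg fun _ _ => norm_nonneg _) (Finset.mem_univ j)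
  have hsplit : (fun j => eval (ev z) (H j)) =
      (fun j => eval (ev z) (F j)) - fun j => eval (ev z) (F j - H j) := by
    funext j
    simp
  have hlow : c * s ^ d - A * s ^ (d - 1) ≤ ‖fun j => eval (ev z) (F j)‖ := by
    have := (htop z hzK).trans (hsplit ▸ norm_sub_le _ _)
    linarith
  have hsd : s ^ d = s ^ (d - 1) * s := by rw [← pow_succ]; congr 1; omega
  have hs_pow : s ≤ s ^ (d - 1) := le_self_pow₀ hs1 (by omega)
  calc C * s ≤ |C| * s := by gcongr; exact le_abs_self C
    _ ≤ |C| * s ^ (d - 1) := by gcongr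
    _ ≤ (c * s - A) * s ^ (d - 1) := by gcongr; linarith
    _ = c * s ^ d - A * s ^ (d - 1) := by rw [hsd]; ring
    _ ≤ _ := hlow

theorem eventually_lt_half_of_norm_eval_lt [Fintype σ] (ev : E →L[ℂ] σ → ℂ)
    (hev : ∀ z, ‖ev z‖ ≤ ‖z‖) {d : ℕ} (hd : 2 ≤ d) (F : ι → MvPolynomial σ ℂ)
    (hF : ∀ j, (F j).totalDegree ≤ d) (N : E → ℝ) (hN : Continuous N)
    (hNsmul : ∀ (c : ℂ) v, N (c • v) = ‖c‖ * N v) (hNle : ∀ v, N v ≤ ‖v‖)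
    (hzero : ∀ v, (∀ j, eval (ev v) (homogeneousComponent d (F j)) = 0) → N v = 0) :
    ∀ᶠ R in atTop, ∀ z, ‖z‖ < R → ‖fun j => eval (ev z) (F j)‖ < R → N z < R / 2 := by
  obtain ⟨R₁, hR₁⟩ := exists_mul_norm_le_norm_eval ev hev hd F hF N hN hNsmul hzero 2 2
  filter_upwards [eventually_ge_atTop (2 * R₁)] with R hR z hzR hFz
  by_contra! hNz
  have := hR₁ z (by linarith [hNle z]) (by linarith)
  linarith [hNle z]

end Growth

section Bidisc

variable {p q : ℕ}

theorem ofV_toV (z : Fin p ⊕ Fin q → ℂ) : ofV (toV z) = z := by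
  funext i
  cases i <;> rfl

theorem norm_ofV_le (z : EuclideanSpace ℂ (Fin p) × EuclideanSpace ℂ (Fin q)) :
    ‖ofV z‖ ≤ ‖z‖ := by
  refine (pi_norm_le_iff_of_nonneg (norm_nonneg z)).2 fun i => ?_
  cases i with
  | inl i => exact (PiLp.norm_apply_le z.1 i).trans (norm_fst_le z)
  | inr i => exact (PiLp.norm_apply_le z.2 i).trans (norm_snd_le z)

noncomputable def ofVL :
    (EuclideanSpace ℂ (Fin p) × EuclideanSpace ℂ (Fin q)) ≃L[ℂ] (Fin p ⊕ Fin q → ℂ) :=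
  LinearEquiv.toContinuousLinearEquiv
    { toFun := ofV
      invFun := toV
      map_add' := fun _ _ => by funext i; cases i <;> rfl
      map_smul' := fun _ _ => by funext i; cases i <;> rfl
      left_inv := fun _ => rfl
      right_inv := ofV_toV }

theorem differentiable_polyMap (P : Fin p ⊕ Fin q → MvPolynomial (Fin p ⊕ Fin q) ℂ) :
    Differentiable ℂ (polyMap P) := by
  have h := fun j => AnalyticOnNhd.eval_continuousLinearMap
    (ofVL (p := p) (q := q)).toContinuousLinearMap (P j)
  exact ofVL.symm.differentiable.comp
    (differentiable_pi.2 fun j z => (h j z (mem_univ z)).differentiableAt)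

theorem polyMap_leftInverse {P Q : Fin p ⊕ Fin q → MvPolynomial (Fin p ⊕ Fin q) ℂ}
    (h : ∀ z : Fin p ⊕ Fin q → ℂ, ∀ j, eval (fun i => eval z (P i)) (Q j) = z j) :
    LeftInverse (polyMap Q) (polyMap P) := fun z => by
  simp only [polyMap, ofV_toV, h]
  rfl

theorem eventually_norm_fst_lt_half {d : ℕ} (hd : 2 ≤ d)
    {P : Fin p ⊕ Fin q → MvPolynomial (Fin p ⊕ Fin q) ℂ}
    (hdeg : ∀ j, (P (Sum.inl j)).totalDegree ≤ d)
    (hzero : ∀ z : Fin p ⊕ Fin q → ℂ,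
      (∀ j : Fin p, eval z (homogeneousComponent d (P (Sum.inl j))) = 0) →
      ∀ i : Fin p, z (Sum.inl i) = 0) :
    ∀ᶠ R in atTop, ∀ z : EuclideanSpace ℂ (Fin p) × EuclideanSpace ℂ (Fin q),
      ‖z‖ < R → ‖(polyMap P z).1‖ < R → ‖z.1‖ < R / 2 := by
  have hN : ∀ z : EuclideanSpace ℂ (Fin p) × EuclideanSpace ℂ (Fin q),
      (∀ j, eval (ofVL z) (homogeneousComponent d (P (Sum.inl j))) = 0) → ‖z.1‖ = 0 :=
    fun z hz => norm_eq_zero.2 (PiLp.ext (hzero (ofV z) hz))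
  filter_upwards [eventually_lt_half_of_norm_eval_lt ofVL.toContinuousLinearMap norm_ofV_le hd
    (fun j => P (Sum.inl j)) hdeg (fun z => ‖z.1‖) continuous_fst.norm
    (fun c z => norm_smul c z.1) norm_fst_le hN] with R hR z hzR hPz
  exact hR z hzR ((pi_norm_le_iff_of_nonneg (norm_nonneg _)).2
    (fun j => PiLp.norm_apply_le (polyMap P z).1 j) |>.trans_lt hPz)

theorem eventually_norm_snd_lt_half {d : ℕ} (hd : 2 ≤ d)
    {Q : Fin p ⊕ Fin q → MvPolynomial (Fin p ⊕ Fin q) ℂ}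
    (hdeg : ∀ j, (Q (Sum.inr j)).totalDegree ≤ d)
    (hzero : ∀ z : Fin p ⊕ Fin q → ℂ,
      (∀ j : Fin q, eval z (homogeneousComponent d (Q (Sum.inr j))) = 0) →
      ∀ i : Fin q, z (Sum.inr i) = 0) :
    ∀ᶠ R in atTop, ∀ z : EuclideanSpace ℂ (Fin p) × EuclideanSpace ℂ (Fin q),
      ‖z‖ < R → ‖(polyMap Q z).2‖ < R → ‖z.2‖ < R / 2 := by
  have hN : ∀ z : EuclideanSpace ℂ (Fin p) × EuclideanSpace ℂ (Fin q),
      (∀ j, eval (ofVL z) (homogeneousComponent d (Q (Sum.inr j))) = 0) → ‖z.2‖ = 0 :=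
    fun z hz => norm_eq_zero.2 (PiLp.ext (hzero (ofV z) hz))
  filter_upwards [eventually_lt_half_of_norm_eval_lt ofVL.toContinuousLinearMap norm_ofV_le hd
    (fun j => Q (Sum.inr j)) hdeg (fun z => ‖z.2‖) continuous_snd.norm
    (fun c z => norm_smul c z.2) norm_snd_le hN] with R hR z hzR hQz
  exact hR z hzR ((pi_norm_le_iff_of_nonneg (norm_nonneg _)).2
    (fun j => PiLp.norm_apply_le (polyMap Q z).2 j) |>.trans_lt hQz)

theorem invHorizLike_of_leftInverse {M M₀ : Set (EuclideanSpace ℂ (Fin p))}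
    {N N₀ : Set (EuclideanSpace ℂ (Fin q))}
    {f g : EuclideanSpace ℂ (Fin p) × EuclideanSpace ℂ (Fin q) →
      EuclideanSpace ℂ (Fin p) × EuclideanSpace ℂ (Fin q)}
    (hM : IsOpen M) (hN : IsOpen N) (hf : Differentiable ℂ f) (hg : Continuous g)
    (hgf : LeftInverse g f) (hfg : RightInverse g f) (hM₀ : IsOpen M₀) (hN₀ : IsOpen N₀)
    (hM₀c : IsCompact (closure M₀)) (hM₀M : closure M₀ ⊆ M)
    (hN₀c : IsCompact (closure N₀)) (hN₀N : closure N₀ ⊆ N)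
    (hU : {z ∈ M ×ˢ N | f z ∈ M ×ˢ N} ⊆ M₀ ×ˢ N)
    (hV : f '' {z ∈ M ×ˢ N | f z ∈ M ×ˢ N} ⊆ M ×ˢ N₀)
    (hne : {z ∈ M ×ˢ N | f z ∈ M ×ˢ N}.Nonempty) :
    InvHorizLike M N f {z ∈ M ×ˢ N | f z ∈ M ×ˢ N} (f '' {z ∈ M ×ˢ N | f z ∈ M ×ˢ N}) := by
  have hD : IsOpen (M ×ˢ N) := hM.prod hN
  have hUo : IsOpen {z ∈ M ×ˢ N | f z ∈ M ×ˢ N} := hD.inter (hD.preimage hf.continuous)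
  refine ⟨hUo, ?_, hne, hne.image f, fun z hz => hz.1, image_subset_iff.2 fun z hz => hz.2,
    hf.differentiableOn, hgf.injective.injOn, rfl, ?_, M₀, N₀, hM₀, hN₀, hM₀c, hM₀M, hN₀c, hN₀N,
    hU, hV⟩
  · rw [image_eq_preimage_of_inverse hgf hfg]
    exact hUo.preimage hg
  · rintro ⟨x, y⟩ ⟨hxy, hx, hy⟩
    have hgraph : y = f x :=
      closure_minimal (by rintro _ ⟨z, -, rfl⟩; rfl)
        (isClosed_eq continuous_snd (hf.continuous.comp continuous_fst)) hxy
    subst hgraph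
    exact ⟨x, ⟨hx, hy⟩, rfl⟩

end Bidisc

theorem stmt_15_general (k p d e : ℕ) (hd : 2 ≤ d) (he : 2 ≤ e)
    (P Q : (Fin p ⊕ Fin (k - p)) → MvPolynomial (Fin p ⊕ Fin (k - p)) ℂ)
    (hinv₁ : ∀ z : (Fin p ⊕ Fin (k - p)) → ℂ, ∀ j,
      eval (fun i => eval z (P i)) (Q j) = z j)
    (hinv₂ : ∀ z : (Fin p ⊕ Fin (k - p)) → ℂ, ∀ j,
      eval (fun i => eval z (Q i)) (P j) = z j)
    (hPdeg : ∀ j, (P j).totalDegree ≤ d)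
    (hQdeg : ∀ j, (Q j).totalDegree ≤ e)
    (hPzero : ∀ z : (Fin p ⊕ Fin (k - p)) → ℂ,
      (∀ j : Fin p, eval z (homogeneousComponent d (P (Sum.inl j))) = 0) →
      ∀ i : Fin p, z (Sum.inl i) = 0)
    (hQzero : ∀ z : (Fin p ⊕ Fin (k - p)) → ℂ,
      (∀ j : Fin (k - p), eval z (homogeneousComponent e (Q (Sum.inr j))) = 0) →
      ∀ i : Fin (k - p), z (Sum.inr i) = 0) :
    ∃ R₀ > 0, ∀ R : ℝ, R₀ ≤ R →
      {z ∈ Metric.ball (0 : EuclideanSpace ℂ (Fin p)) R ×ˢ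
          Metric.ball (0 : EuclideanSpace ℂ (Fin (k - p))) R |
        polyMap P z ∈ Metric.ball (0 : EuclideanSpace ℂ (Fin p)) R ×ˢ
          Metric.ball (0 : EuclideanSpace ℂ (Fin (k - p))) R} ⊆
        Metric.ball 0 (R / 2) ×ˢ Metric.ball 0 R ∧
      polyMap P '' {z ∈ Metric.ball (0 : EuclideanSpace ℂ (Fin p)) R ×ˢ
          Metric.ball (0 : EuclideanSpace ℂ (Fin (k - p))) R |
        polyMap P z ∈ Metric.ball (0 : EuclideanSpace ℂ (Fin p)) R ×ˢ
          Metric.ball (0 : EuclideanSpace ℂ (Fin (k - p))) R} ⊆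
        Metric.ball 0 R ×ˢ Metric.ball 0 (R / 2) ∧
      ({z ∈ Metric.ball (0 : EuclideanSpace ℂ (Fin p)) R ×ˢ
          Metric.ball (0 : EuclideanSpace ℂ (Fin (k - p))) R |
        polyMap P z ∈ Metric.ball (0 : EuclideanSpace ℂ (Fin p)) R ×ˢ
          Metric.ball (0 : EuclideanSpace ℂ (Fin (k - p))) R}.Nonempty →
        InvHorizLike (Metric.ball 0 R) (Metric.ball 0 R) (polyMap P)
          {z ∈ Metric.ball (0 : EuclideanSpace ℂ (Fin p)) R ×ˢ
              Metric.ball (0 : EuclideanSpace ℂ (Fin (k - p))) R |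
            polyMap P z ∈ Metric.ball (0 : EuclideanSpace ℂ (Fin p)) R ×ˢ
              Metric.ball (0 : EuclideanSpace ℂ (Fin (k - p))) R}
          (polyMap P '' {z ∈ Metric.ball (0 : EuclideanSpace ℂ (Fin p)) R ×ˢ
              Metric.ball (0 : EuclideanSpace ℂ (Fin (k - p))) R |
            polyMap P z ∈ Metric.ball (0 : EuclideanSpace ℂ (Fin p)) R ×ˢ
              Metric.ball (0 : EuclideanSpace ℂ (Fin (k - p))) R})) := by
  have hgf : LeftInverse (polyMap Q) (polyMap P) := polyMap_leftInverse hinv₁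
  obtain ⟨R₀, hR₀⟩ := eventually_atTop.1
    ((eventually_norm_fst_lt_half hd (fun _ => hPdeg _) hPzero).and
      ((eventually_norm_snd_lt_half he (fun _ => hQdeg _) hQzero).and (eventually_gt_atTop 0)))
  refine ⟨R₀, (hR₀ R₀ le_rfl).2.2, fun R hR => ?_⟩
  obtain ⟨hfst, hsnd, hRpos⟩ := hR₀ R hR
  have hD : ∀ z : EuclideanSpace ℂ (Fin p) × EuclideanSpace ℂ (Fin (k - p)),
      z ∈ ball 0 R ×ˢ ball 0 R ↔ ‖z‖ < R := by
    simp [Prod.norm_def]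
  have hU : {z ∈ ball 0 R ×ˢ ball 0 R | polyMap P z ∈ ball 0 R ×ˢ ball 0 R} ⊆
      ball 0 (R / 2) ×ˢ ball 0 R := fun z hz =>
    ⟨mem_ball_zero_iff.2 (hfst z ((hD z).1 hz.1) ((norm_fst_le _).trans_lt ((hD _).1 hz.2))),
      hz.1.2⟩
  have hV : polyMap P '' {z ∈ ball 0 R ×ˢ ball 0 R | polyMap P z ∈ ball 0 R ×ˢ ball 0 R} ⊆
      ball 0 R ×ˢ ball 0 (R / 2) := by
    rintro _ ⟨z, hz, rfl⟩
    refine ⟨hz.2.1, mem_ball_zero_iff.2 (hsnd _ ((hD _).1 hz.2) ?_)⟩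
    rw [hgf z]
    exact (norm_snd_le z).trans_lt ((hD z).1 hz.1)
  have hball : ∀ n : ℕ, IsCompact (closure (ball (0 : EuclideanSpace ℂ (Fin n)) (R / 2))) ∧
      closure (ball (0 : EuclideanSpace ℂ (Fin n)) (R / 2)) ⊆ ball 0 R := fun n => by
    rw [closure_ball _ (by positivity)]
    exact ⟨isCompact_closedBall _ _, closedBall_subset_ball (by linarith)⟩
  exact ⟨hU, hV, invHorizLike_of_leftInverse isOpen_ball isOpen_ball (differentiable_polyMap P)
    (differentiable_polyMap Q).continuous hgf (polyMap_leftInverse hinv₂) isOpen_ball isOpen_ball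
    (hball p).1 (hball p).2 (hball (k - p)).1 (hball (k - p)).2 hU hV⟩

/-- **Regular polynomial automorphisms restricted to a large bidisc are horizontal-like.**
If `f` is a polynomial automorphism of `ℂ^k` with polynomial inverse `g`, with
`deg f_j ≤ d`, the degree-`d` homogeneous parts of `f₁,…,f_p` having no common zero outside
`{z' = 0}`, and the symmetric conditions for `g` with degree `e` and `{z'' = 0}`, then for `R`
large, with `D = B_p^R × B_{k−p}^R` and `U = D ∩ f⁻¹(D)`, one has
`U ⊆ B_p^{R/2} × B_{k−p}^R`, `f(U) ⊆ B_p^R × B_{k−p}^{R/2}`; in particular, if `U ≠ ∅` then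
`f : U → f(U)` is an invertible horizontal-like map on `D`. -/
theorem stmt_15 (k p d e : ℕ) (hp : 1 ≤ p) (hpk : p + 1 ≤ k) (hd : 2 ≤ d) (he : 2 ≤ e)
    (P Q : (Fin p ⊕ Fin (k - p)) → MvPolynomial (Fin p ⊕ Fin (k - p)) ℂ)
    (hinv₁ : ∀ z : (Fin p ⊕ Fin (k - p)) → ℂ, ∀ j,
      eval (fun i => eval z (P i)) (Q j) = z j)
    (hinv₂ : ∀ z : (Fin p ⊕ Fin (k - p)) → ℂ, ∀ j,
      eval (fun i => eval z (Q i)) (P j) = z j)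
    (hPdeg : ∀ j, (P j).totalDegree ≤ d)
    (hQdeg : ∀ j, (Q j).totalDegree ≤ e)
    (hPzero : ∀ z : (Fin p ⊕ Fin (k - p)) → ℂ,
      (∀ j : Fin p, eval z (homogeneousComponent d (P (Sum.inl j))) = 0) →
      ∀ i : Fin p, z (Sum.inl i) = 0)
    (hQzero : ∀ z : (Fin p ⊕ Fin (k - p)) → ℂ,
      (∀ j : Fin (k - p), eval z (homogeneousComponent e (Q (Sum.inr j))) = 0) →
      ∀ i : Fin (k - p), z (Sum.inr i) = 0) :
    ∃ R₀ > 0, ∀ R : ℝ, R₀ ≤ R →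
      {z ∈ Metric.ball (0 : EuclideanSpace ℂ (Fin p)) R ×ˢ
          Metric.ball (0 : EuclideanSpace ℂ (Fin (k - p))) R |
        polyMap P z ∈ Metric.ball (0 : EuclideanSpace ℂ (Fin p)) R ×ˢ
          Metric.ball (0 : EuclideanSpace ℂ (Fin (k - p))) R} ⊆
        Metric.ball 0 (R / 2) ×ˢ Metric.ball 0 R ∧
      polyMap P '' {z ∈ Metric.ball (0 : EuclideanSpace ℂ (Fin p)) R ×ˢ
          Metric.ball (0 : EuclideanSpace ℂ (Fin (k - p))) R |
        polyMap P z ∈ Metric.ball (0 : EuclideanSpace ℂ (Fin p)) R ×ˢ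
          Metric.ball (0 : EuclideanSpace ℂ (Fin (k - p))) R} ⊆
        Metric.ball 0 R ×ˢ Metric.ball 0 (R / 2) ∧
      ({z ∈ Metric.ball (0 : EuclideanSpace ℂ (Fin p)) R ×ˢ
          Metric.ball (0 : EuclideanSpace ℂ (Fin (k - p))) R |
        polyMap P z ∈ Metric.ball (0 : EuclideanSpace ℂ (Fin p)) R ×ˢ
          Metric.ball (0 : EuclideanSpace ℂ (Fin (k - p))) R}.Nonempty →
        InvHorizLike (Metric.ball 0 R) (Metric.ball 0 R) (polyMap P)
          {z ∈ Metric.ball (0 : EuclideanSpace ℂ (Fin p)) R ×ˢ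
              Metric.ball (0 : EuclideanSpace ℂ (Fin (k - p))) R |
            polyMap P z ∈ Metric.ball (0 : EuclideanSpace ℂ (Fin p)) R ×ˢ
              Metric.ball (0 : EuclideanSpace ℂ (Fin (k - p))) R}
          (polyMap P '' {z ∈ Metric.ball (0 : EuclideanSpace ℂ (Fin p)) R ×ˢ
              Metric.ball (0 : EuclideanSpace ℂ (Fin (k - p))) R |
            polyMap P z ∈ Metric.ball (0 : EuclideanSpace ℂ (Fin p)) R ×ˢ
              Metric.ball (0 : EuclideanSpace ℂ (Fin (k - p))) R})) :=
  stmt_15_general k p d e hd he P Q hinv₁ hinv₂ hPdeg hQdeg hPzero hQzero
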